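/- arXiv:1711.01584 — 6 statements merged into one kernel-verified Lean document; each statement's English description precedes it below -/
import Mathlib

section
/- Let p be a prime, r ≥ 1, and x an integer not divisible by p^r - 1. Then [x]_{p,r} = (p-1) · Σ_{i=0}^{r-1} {p^i x / (p^r - 1)}, where {·} denotes the fractional part. -/
/-- The sum of the base-`p` digits of the representative `y` of `z` mod `p^r - 1`
with `1 ≤ y ≤ p^r - 1`; by convention it is `r*(p-1)` when `p^r - 1 ∣ z`. -/
def brSum (p r : ℕ) (z : ℤ) : ℕ :=
  if ((p : ℤ) ^ r - 1) ∣ z then r * (p - 1)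
  else (Nat.digits p (z % ((p : ℤ) ^ r - 1)).toNat).sum

/-!
Put `n = p^r - 1` and let `0 ≤ y < n` be the residue of `x`. Since `p^i x / n` and `p^i y / n`
differ by an integer, `{p^i x / n} = p^i y / n - ⌊p^i y / n⌋`. As `y / n = 0.(y)(y)…` in base `p`
with period `r`, the integer part `⌊p^i y / n⌋` is `⌊y / p^(r-i)⌋`, the leading `i` digits of `y`.
Summing over `i < r`, the fractional parts contribute `(p-1) Σ p^i y / n = y`, and the integer parts
`(p-1) Σ_{k=1}^{r} ⌊y / p^k⌋ = y - s_p(y)` by Legendre's digit-sum formula.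
-/

open Finset

namespace Nat

/-- Writing `y = A s + B` with `B < s`, one has `q y = A (q s - 1) + (A + q B)`, and
`A + q B < q s - 1` because `y ≠ q s - 1`. -/
theorem mul_div_mul_sub_one {q s y : ℕ} (hy : y < q * s - 1) : q * y / (q * s - 1) = y / s := by
  have hs : 0 < s := pos_of_ne_zero (by rintro rfl; simp at hy)
  obtain ⟨N, hN⟩ : ∃ N, q * s = N + 1 := ⟨q * s - 1, by omega⟩
  rw [hN, Nat.add_sub_cancel] at hy ⊢
  rw [← div_add_mod y s] at hy ⊢
  have hB := mod_lt y hs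
  generalize y / s = A, y % s = B at *
  rw [mul_add_div hs, div_eq_of_lt hB, add_zero]
  have hA : A < q := by nlinarith
  apply Nat.div_eq_of_lt_le
  · nlinarith
  · nlinarith

theorem sub_one_mul_sum_div_pow_eq_sub_sum_digits_of_lt {p r y : ℕ} (hp : 1 < p)
    (hy : y < p ^ r) :
    (p - 1) * ∑ i ∈ range r, y / p ^ (i + 1) = y - (p.digits y).sum := by
  rcases eq_or_ne y 0 with rfl | hy0
  · simp
  rw [← sub_one_mul_sum_log_div_pow_eq_sub_sum_digits, ← sum_subset]
  · exact range_subset_range.2 (log_lt_of_lt_pow hy0 hy)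
  · intro i _ hi
    rw [mem_range, not_lt] at hi
    exact div_eq_of_lt ((lt_pow_succ_log_self hp y).trans_le (pow_le_pow_right₀ hp.le (by omega)))

theorem sub_one_mul_sum_pow_mul_mod {p r y : ℕ} (hy : y < p ^ r - 1) :
    (p - 1) * ∑ i ∈ range r, p ^ i * y % (p ^ r - 1) = (p ^ r - 1) * (p.digits y).sum := by
  have hp : 1 < p := by
    by_contra! h
    have : p ^ r ≤ 1 := pow_le_one' h r
    omega
  set n := p ^ r - 1 with hn
  have hdiv : ∑ i ∈ range r, p ^ i * y / n = ∑ i ∈ range r, y / p ^ (i + 1) := by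
    rw [← sum_range_reflect]
    refine sum_congr rfl fun i hi => ?_
    have hi := mem_range.1 hi
    have hpr : p ^ r = p ^ (r - 1 - i) * p ^ (i + 1) := by rw [← pow_add]; congr 1; omega
    rw [show n = p ^ (r - 1 - i) * p ^ (i + 1) - 1 by rw [← hpr]]
    exact mul_div_mul_sub_one (by omega)
  have hmod : ∑ i ∈ range r, p ^ i * y % n + n * ∑ i ∈ range r, p ^ i * y / n
      = y * ∑ i ∈ range r, p ^ i := by
    rw [mul_sum, ← sum_add_distrib, mul_sum]
    exact sum_congr rfl fun i _ => by rw [mod_add_div, mul_comm]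
  have hgeom := geom_sum_mul (p : ℤ) r
  have hdigits := sub_one_mul_sum_div_pow_eq_sub_sum_digits_of_lt hp (show y < p ^ r by omega)
  have hle := digit_sum_le p y
  have hnZ : (n : ℤ) = (p : ℤ) ^ r - 1 := by
    rw [hn, cast_sub (one_le_pow r p (by omega))]; push_cast; rfl
  rw [hdiv] at hmod
  clear_value n
  zify [hp.le, hle] at hmod hdigits ⊢
  linear_combination (↑p - 1) * hmod - ↑n * hdigits + ↑y * hgeom - y * hnZ

end Nat

theorem brSum_eq_fract_sum (p r : ℕ) (hp : p.Prime) (hr : 1 ≤ r) (x : ℤ)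
    (hx : ¬ ((p : ℤ) ^ r - 1) ∣ x) :
    (brSum p r x : ℝ) =
      ((p : ℝ) - 1) * ∑ i ∈ Finset.range r,
        Int.fract ((p : ℝ) ^ i * (x : ℝ) / ((p : ℝ) ^ r - 1)) := by
  have hpr : 1 < p ^ r := Nat.one_lt_pow (by omega) hp.one_lt
  set n := p ^ r - 1 with hn
  have hnZ : (n : ℤ) = (p : ℤ) ^ r - 1 := by rw [hn, Nat.cast_sub hpr.le]; push_cast; rfl
  have hnR : (n : ℝ) = (p : ℝ) ^ r - 1 := by exact_mod_cast hnZ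
  have hn0 : (n : ℝ) ≠ 0 := by exact_mod_cast (by omega : n ≠ 0)
  obtain ⟨y, hy⟩ : ∃ y : ℕ, x % n = y := Int.eq_ofNat_of_zero_le (Int.emod_nonneg x (by omega))
  have hyn : y < n := by have := Int.emod_lt_of_pos x (by omega : (0 : ℤ) < n); omega
  have hfract (i : ℕ) : Int.fract ((p : ℝ) ^ i * x / ((p : ℝ) ^ r - 1))
      = ((p ^ i * y % n : ℕ) : ℝ) / n := by
    have hxy : (p : ℝ) ^ i * x / n = ((p ^ i * y : ℕ) : ℝ) / n + ((p ^ i * (x / n) : ℤ) : ℝ) := by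
      have hx_eq := congrArg (Int.cast : ℤ → ℝ) (Int.emod_add_mul_ediv x n)
      rw [hy] at hx_eq
      push_cast at hx_eq ⊢
      field_simp
      linear_combination (p : ℝ) ^ i * hx_eq.symm
    rw [← hnR, hxy, Int.fract_add_intCast, Int.fract_div_natCast_eq_div_natCast_mod]
  rw [brSum, if_neg hx, ← hnZ, hy, Int.toNat_natCast, sum_congr rfl fun i _ => hfract i,
    ← sum_div, ← Nat.cast_sum, ← Nat.cast_pred hp.pos, ← mul_div_assoc, ← Nat.cast_mul,
    Nat.sub_one_mul_sum_pow_mul_mod hyn, Nat.cast_mul, mul_div_cancel_left₀ _ hn0]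
end

section
/- Let p be a prime, a ≥ 1 an integer, and d = p^a + 1. Then for every r ≥ 1 and every integer x with 1 ≤ x ≤ p^r - 2, one has [d·x]_{p,r} ≤ [x]_{p,r} + r(p-1)/2, i.e., 2·[d·x]_{p,r} ≤ 2·[x]_{p,r} + r(p-1). -/
section Aux

variable {p : ℕ}

/-- Subadditivity of the base-`p` digit sum, via Legendre's formula. -/
lemma digitSum_add_le (hp : p.Prime) (u v : ℕ) :
    (Nat.digits p (u + v)).sum ≤ (Nat.digits p u).sum + (Nat.digits p v).sum := by
  haveI : Fact p.Prime := ⟨hp⟩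
  have h1 : (p - 1) * padicValNat p (Nat.factorial u) = u - (Nat.digits p u).sum :=
    sub_one_mul_padicValNat_factorial u
  have h2 : (p - 1) * padicValNat p (Nat.factorial v) = v - (Nat.digits p v).sum :=
    sub_one_mul_padicValNat_factorial v
  have h3 : (p - 1) * padicValNat p (Nat.factorial (u + v)) = (u + v) - (Nat.digits p (u + v)).sum :=
    sub_one_mul_padicValNat_factorial (u + v)
  have hle1 := Nat.digit_sum_le p u
  have hle2 := Nat.digit_sum_le p v
  have hle3 := Nat.digit_sum_le p (u + v)
  have hfac : (u + v).choose v * Nat.factorial u * Nat.factorial v = Nat.factorial (u + v) :=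
    Nat.add_choose_mul_factorial_mul_factorial u v
  have hval : padicValNat p (Nat.factorial (u + v)) =
      padicValNat p ((u + v).choose v) + padicValNat p (Nat.factorial u) + padicValNat p (Nat.factorial v) := by
    rw [← hfac, padicValNat.mul
        (Nat.mul_ne_zero (Nat.choose_pos (Nat.le_add_left v u)).ne' (Nat.factorial_ne_zero u))
        (Nat.factorial_ne_zero v),
      padicValNat.mul (Nat.choose_pos (Nat.le_add_left v u)).ne' (Nat.factorial_ne_zero u)]
  have hv : padicValNat p (Nat.factorial u) + padicValNat p (Nat.factorial v)
      ≤ padicValNat p (Nat.factorial (u + v)) := by omega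
  have hmul := Nat.mul_le_mul_left (p - 1) hv
  rw [Nat.mul_add] at hmul
  omega

/-- Digit sum is invariant under multiplication by the base. -/
lemma digitSum_base_mul (hp : 2 ≤ p) (q : ℕ) :
    (Nat.digits p (p * q)).sum = (Nat.digits p q).sum := by
  rcases Nat.eq_zero_or_pos q with rfl | hq
  · simp
  · rw [Nat.digits_def' hp (by positivity), Nat.mul_mod_right,
      Nat.mul_div_cancel_left _ (by omega)]
    simp

lemma digitSum_pow_mul (hp : 2 ≤ p) (j q : ℕ) :
    (Nat.digits p (p ^ j * q)).sum = (Nat.digits p q).sum := by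
  induction j with
  | zero => simp
  | succ j ih => rw [pow_succ, mul_comm (p ^ j) p, mul_assoc, digitSum_base_mul hp, ih]

/-- Digit sum of a concatenation. -/
lemma digitSum_pow_mul_add (hp : 2 ≤ p) {j q t : ℕ} (ht : t < p ^ j) :
    (Nat.digits p (p ^ j * q + t)).sum = (Nat.digits p q).sum + (Nat.digits p t).sum := by
  have hlen : (Nat.digits p t).length ≤ j := by
    rcases Nat.eq_zero_or_pos t with rfl | htpos
    · simp
    · rw [Nat.digits_len p t hp htpos.ne']
      have := Nat.log_lt_of_lt_pow htpos.ne' ht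
      omega
  have key : p ^ j * q + t = t + p ^ (Nat.digits p t).length * (p ^ (j - (Nat.digits p t).length) * q) := by
    rw [← mul_assoc, ← pow_add]
    have : (Nat.digits p t).length + (j - (Nat.digits p t).length) = j := by omega
    rw [this]; ring
  rw [key, ← Nat.digits_append_digits (by omega : 0 < p), List.sum_append,
    digitSum_pow_mul hp]
  omega

/-- Reducing mod `p^r - 1` does not increase the digit sum. -/
lemma digitSum_mod_le (hpp : p.Prime) {r : ℕ} (hr : 1 ≤ r) (n : ℕ) :
    (Nat.digits p (n % (p ^ r - 1))).sum ≤ (Nat.digits p n).sum := by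
  have hp : 2 ≤ p := hpp.two_le
  have hm : 2 ≤ p ^ r := by
    calc 2 = 2 ^ 1 := rfl
    _ ≤ p ^ r := Nat.pow_le_pow_left hp r |>.trans' (Nat.pow_le_pow_right (by norm_num) hr)
  induction n using Nat.strong_induction_on with
  | _ n ih =>
    by_cases hlt : n < p ^ r - 1
    · rw [Nat.mod_eq_of_lt hlt]
    · push_neg at hlt
      by_cases hsm : n < p ^ r
      · have : n = p ^ r - 1 := by omega
        subst this
        simp
      · push_neg at hsm
        set q := n / p ^ r with hqdef
        set t := n % p ^ r with htdef
        have hq1 : 1 ≤ q := Nat.one_le_div_iff (by omega) |>.2 hsm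
        have hn : n = p ^ r * q + t := (Nat.div_add_mod n (p ^ r)).symm
        have htlt : t < p ^ r := Nat.mod_lt _ (by omega)
        have hmod : n % (p ^ r - 1) = (q + t) % (p ^ r - 1) := by
          have heq : p ^ r * q + t = (q + t) + (p ^ r - 1) * q := by
            zify [(by omega : 1 ≤ p ^ r)]
            ring
          conv_lhs => rw [hn, heq, Nat.add_mul_mod_self_left]
        have hsmall : q + t < n := by nlinarith
        calc (Nat.digits p (n % (p ^ r - 1))).sum
            = (Nat.digits p ((q + t) % (p ^ r - 1))).sum := by rw [hmod]
          _ ≤ (Nat.digits p (q + t)).sum := ih _ hsmall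
          _ ≤ (Nat.digits p q).sum + (Nat.digits p t).sum := digitSum_add_le hpp q t
          _ = (Nat.digits p n).sum := by rw [hn, digitSum_pow_mul_add hp htlt]

/-- Digit sum bound for numbers below `p^r`. -/
lemma digitSum_le_of_lt_pow (hp : 2 ≤ p) {r n : ℕ} (hn : n < p ^ r) :
    (Nat.digits p n).sum ≤ r * (p - 1) := by
  have hlen : (Nat.digits p n).length ≤ r := by
    rcases Nat.eq_zero_or_pos n with rfl | hpos
    · simp
    · rw [Nat.digits_len p n hp hpos.ne']
      have := Nat.log_lt_of_lt_pow hpos.ne' hn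
      omega
  calc (Nat.digits p n).sum ≤ (Nat.digits p n).length * (p - 1) := by
        apply List.sum_le_card_nsmul
        intro x hx
        have := Nat.digits_lt_base hp hx
        omega
    _ ≤ r * (p - 1) := Nat.mul_le_mul_right _ hlen

/-- Digit sum of `p^r - 1` is `r*(p-1)`. -/
lemma digitSum_pow_sub_one (hp : 2 ≤ p) (r : ℕ) :
    (Nat.digits p (p ^ r - 1)).sum = r * (p - 1) := by
  induction r with
  | zero => simp
  | succ r ih =>
    have h2 : 1 ≤ p ^ r := Nat.one_le_pow _ _ (by omega)
    have hpos : 0 < p ^ (r + 1) - 1 := by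
      have : p ≤ p ^ (r + 1) := Nat.le_self_pow (by omega) p
      omega
    have hval : p ^ (r + 1) - 1 = (p - 1) + p * (p ^ r - 1) := by
      zify [h2, (by omega : 1 ≤ p), (by omega : 1 ≤ p ^ (r + 1))]
      ring
    rw [hval, Nat.digits_def' (by omega : 1 < p) (by omega),
      Nat.add_mul_mod_self_left, Nat.mod_eq_of_lt (by omega),
      Nat.add_mul_div_left _ _ (by omega : 0 < p), Nat.div_eq_of_lt (by omega)]
    simp only [List.sum_cons, zero_add, ih]
    ring

/-- Multiplication by `p` mod `p^r - 1` cyclically shifts digits: preserves digit sum and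
nonvanishing. -/
lemma cycle_step (hp : 2 ≤ p) {r y : ℕ} (hr : 1 ≤ r) (hy1 : 1 ≤ y) (hy2 : y < p ^ r - 1) :
    1 ≤ (p * y) % (p ^ r - 1) ∧ (p * y) % (p ^ r - 1) < p ^ r - 1 ∧
      (Nat.digits p ((p * y) % (p ^ r - 1))).sum = (Nat.digits p y).sum := by
  set q := y / p ^ (r - 1) with hq
  set t := y % p ^ (r - 1) with ht
  have hA : 0 < p ^ (r - 1) := pow_pos (by omega) _
  have hB : 0 < p ^ r := pow_pos (by omega) _
  have hyqt : y = p ^ (r - 1) * q + t := (Nat.div_add_mod y (p ^ (r-1))).symm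
  have htlt : t < p ^ (r - 1) := Nat.mod_lt _ hA
  have hpr : p ^ r = p ^ (r - 1) * p := by
    rw [← pow_succ]
    congr 1
    omega
  have hqlt : q < p := Nat.div_lt_of_lt_mul (by omega)
  have hpy : p * y = p ^ r * q + p * t := by
    rw [hyqt, hpr]; ring
  have hkey : p * y = (p ^ r - 1) * q + (q + p * t) := by
    zify [(by omega : 1 ≤ p ^ r)]
    have : ((p : ℤ)) * y = (p:ℤ) ^ r * q + p * t := by exact_mod_cast congrArg (Nat.cast (R := ℤ)) hpy
    linarith
  have hq2 : t = p ^ (r-1) - 1 → q < p - 1 := by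
    intro htq
    by_contra hcon
    push_neg at hcon
    have hqe : q = p - 1 := by omega
    have : y = p ^ r - 1 := by
      rw [hyqt, htq, hqe]
      zify [(by omega : 1 ≤ p), (by omega : 1 ≤ p ^ (r-1)), (by omega : 1 ≤ p ^ r)]
      have : ((p:ℤ)) ^ r = (p:ℤ) ^ (r-1) * p := by exact_mod_cast congrArg (Nat.cast (R := ℤ)) hpr
      linarith
    omega
  have hsum_lt : q + p * t < p ^ r - 1 := by
    rcases Nat.lt_or_ge t (p ^ (r-1) - 1) with h | h
    · have h' : t + 2 ≤ p ^ (r-1) := by omega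
      zify [(by omega : 1 ≤ p ^ r)]
      have hz : ((p:ℤ)) ^ r = (p:ℤ) ^ (r-1) * p := by exact_mod_cast congrArg (Nat.cast (R := ℤ)) hpr
      have hz2 : ((t:ℤ)) + 2 ≤ (p:ℤ) ^ (r-1) := by exact_mod_cast h'
      have hz3 : ((q:ℤ)) < p := by exact_mod_cast hqlt
      nlinarith [hz2, hz3, (by exact_mod_cast hp : (2:ℤ) ≤ (p:ℤ))]
    · have htq : t = p ^ (r-1) - 1 := by omega
      have hq3 : q < p - 1 := hq2 htq
      zify [(by omega : 1 ≤ p ^ r), (by omega : 1 ≤ p ^ (r-1))] at htq ⊢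
      have hz : ((p:ℤ)) ^ r = (p:ℤ) ^ (r-1) * p := by exact_mod_cast congrArg (Nat.cast (R := ℤ)) hpr
      have hz3 : ((q:ℤ)) < (p:ℤ) - 1 := by
        have : (q:ℤ) < ((p - 1 : ℕ) : ℤ) := by exact_mod_cast hq3
        omega
      nlinarith [(by exact_mod_cast hp : (2:ℤ) ≤ (p:ℤ))]
  have hmod : (p * y) % (p ^ r - 1) = q + p * t := by
    rw [hkey, add_comm ((p ^ r - 1) * q), Nat.add_mul_mod_self_left,
      Nat.mod_eq_of_lt hsum_lt]
  have hqt1 : 1 ≤ q + p * t := by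
    rcases Nat.eq_zero_or_pos t with h0 | hh
    · rcases Nat.eq_zero_or_pos q with h1 | h1
      · rw [h0, h1] at hyqt; simp at hyqt; omega
      · omega
    · nlinarith
  refine ⟨by omega, by omega, ?_⟩
  rw [hmod]
  have hsq : (Nat.digits p q).sum = q := by
    rcases Nat.eq_zero_or_pos q with h0 | hh
    · rw [h0]; simp
    · rw [Nat.digits_of_lt p q hh.ne' hqlt]; simp
  have h1 : (Nat.digits p (q + p * t)).sum = q + (Nat.digits p t).sum := by
    rcases Nat.eq_zero_or_pos (q + p * t) with h0 | hh
    · exact absurd h0 (by omega)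
    · rw [Nat.digits_def' (by omega : 1 < p) hh, Nat.add_mul_mod_self_left,
        Nat.mod_eq_of_lt hqlt, Nat.add_mul_div_left _ _ (by omega : 0 < p),
        Nat.div_eq_of_lt hqlt]
      simp
  have h2 : (Nat.digits p y).sum = q + (Nat.digits p t).sum := by
    rw [hyqt, digitSum_pow_mul_add hp htlt, hsq]
  omega

lemma cycle_pow (hp : 2 ≤ p) {r y : ℕ} (hr : 1 ≤ r) (hy1 : 1 ≤ y) (hy2 : y < p ^ r - 1)
    (a : ℕ) :
    1 ≤ (p ^ a * y) % (p ^ r - 1) ∧ (p ^ a * y) % (p ^ r - 1) < p ^ r - 1 ∧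
      (Nat.digits p ((p ^ a * y) % (p ^ r - 1))).sum = (Nat.digits p y).sum := by
  induction a with
  | zero =>
    simp only [pow_zero, one_mul]
    rw [Nat.mod_eq_of_lt hy2]
    exact ⟨hy1, hy2, rfl⟩
  | succ a ih =>
    obtain ⟨i1, i2, i3⟩ := ih
    have hstep := cycle_step hp hr i1 i2
    have : (p ^ (a+1) * y) % (p ^ r - 1) = (p * ((p ^ a * y) % (p ^ r - 1))) % (p ^ r - 1) := by
      conv_lhs => rw [pow_succ, mul_comm (p ^ a) p, mul_assoc, Nat.mul_mod]
      conv_rhs => rw [Nat.mul_mod, Nat.mod_mod_of_dvd _ dvd_rfl]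
    rw [this]
    exact ⟨hstep.1, hstep.2.1, hstep.2.2.trans i3⟩

/-- The core inequality, at the level of natural numbers. -/
lemma core_ineq (hpp : p.Prime) {a r x : ℕ} (ha : 1 ≤ a) (hr : 1 ≤ r)
    (hx1 : 1 ≤ x) (hx2 : x < p ^ r - 1) :
    (if (p ^ r - 1) ∣ ((p ^ a + 1) * x) then 2 * (r * (p - 1))
      else 2 * (Nat.digits p (((p ^ a + 1) * x) % (p ^ r - 1))).sum)
      ≤ 2 * (Nat.digits p x).sum + r * (p - 1) := by
  have hp : 2 ≤ p := hpp.two_le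
  have hm2 : 2 ≤ p ^ r - 1 := by omega
  obtain ⟨c1, c2, c3⟩ := cycle_pow hp hr hx1 hx2 a
  set m := p ^ r - 1 with hmdef
  set u := (p ^ a * x) % m with hu
  by_cases hdvd : m ∣ ((p ^ a + 1) * x)
  · rw [if_pos hdvd]
    -- u + x ≡ 0 mod m with 2 ≤ u + x ≤ 2m - 2, hence u = m - x
    have hux : m ∣ (u + x) := by
      have heq : (p ^ a + 1) * x = p ^ a * x + x := by ring
      rw [heq] at hdvd
      have hmeq : u + x ≡ p ^ a * x + x [MOD m] :=
        Nat.ModEq.add_right x (Nat.mod_modEq _ _)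
      exact (Nat.modEq_zero_iff_dvd).1 (hmeq.trans ((Nat.modEq_zero_iff_dvd).2 hdvd))
    have huval : u = m - x := by
      obtain ⟨k, hk⟩ := hux
      have hk1 : 1 ≤ k := by
        rcases Nat.eq_zero_or_pos k with rfl | h
        · simp at hk; omega
        · omega
      have hk2 : k < 2 := by nlinarith
      have : k = 1 := by omega
      subst this
      omega
    -- digit sums: s(m) ≤ s(x) + s(m - x) = 2 s(x)
    have hsum : r * (p - 1) ≤ 2 * (Nat.digits p x).sum := by
      have h1 : (Nat.digits p m).sum ≤ (Nat.digits p x).sum + (Nat.digits p (m - x)).sum := by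
        have : m = x + (m - x) := by omega
        calc (Nat.digits p m).sum = (Nat.digits p (x + (m - x))).sum := by rw [← this]
          _ ≤ _ := digitSum_add_le hpp _ _
      have h2 : (Nat.digits p m).sum = r * (p - 1) := digitSum_pow_sub_one hp r
      have h3 : (Nat.digits p (m - x)).sum = (Nat.digits p x).sum := by
        rw [← huval]; exact c3
      omega
    omega
  · rw [if_neg hdvd]
    have hmodeq : ((p ^ a + 1) * x) % m = (u + x) % m := by
      have h0 : (p ^ a + 1) * x = p ^ a * x + x := by ring
      have hmeq : p ^ a * x + x ≡ u + x [MOD m] :=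
        Nat.ModEq.add_right x (Nat.mod_modEq _ _).symm
      rw [h0]
      exact hmeq
    have hb1 : (Nat.digits p (((p ^ a + 1) * x) % m)).sum ≤ 2 * (Nat.digits p x).sum := by
      rw [hmodeq]
      calc (Nat.digits p ((u + x) % m)).sum
          ≤ (Nat.digits p (u + x)).sum := digitSum_mod_le hpp hr _
        _ ≤ (Nat.digits p u).sum + (Nat.digits p x).sum := digitSum_add_le hpp _ _
        _ = 2 * (Nat.digits p x).sum := by omega
    have hb2 : (Nat.digits p (((p ^ a + 1) * x) % m)).sum ≤ r * (p - 1) := by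
      apply digitSum_le_of_lt_pow hp
      have : ((p ^ a + 1) * x) % m < m := Nat.mod_lt _ (by omega)
      omega
    omega

end Aux

theorem brSum_mul_le_of_pow_add_one (p a : ℕ) (hp : p.Prime) (ha : 1 ≤ a)
    (d : ℕ) (hd : d = p ^ a + 1) :
    ∀ r : ℕ, 1 ≤ r → ∀ x : ℤ, 1 ≤ x → x ≤ (p : ℤ) ^ r - 2 →
      2 * brSum p r ((d : ℤ) * x) ≤ 2 * brSum p r x + r * (p - 1) := by
  intro r hr x hx1 hx2
  have hp2 : 2 ≤ p := hp.two_le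
  have hm1 : 1 ≤ p ^ r := Nat.one_le_pow _ _ (by omega)
  have hcast : ((p : ℤ) ^ r - 1) = ((p ^ r - 1 : ℕ) : ℤ) := by
    push_cast [Nat.cast_sub hm1]
    ring
  -- identify x with a natural number n
  set n := x.toNat with hn
  have hxn : x = (n : ℤ) := (Int.toNat_of_nonneg (by omega)).symm
  have hn1 : 1 ≤ n := by omega
  have hn2 : n < p ^ r - 1 := by
    have : (n : ℤ) ≤ (p : ℤ) ^ r - 2 := hxn ▸ hx2
    have hcast2 : ((p ^ r - 1 : ℕ) : ℤ) = (p : ℤ) ^ r - 1 := hcast.symm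
    omega
  subst hd
  have hmul : ((p ^ a + 1 : ℕ) : ℤ) * x = (((p ^ a + 1) * n : ℕ) : ℤ) := by
    rw [hxn]; push_cast; ring
  -- compute brSum of x
  have hbx : brSum p r x = (Nat.digits p n).sum := by
    unfold brSum
    rw [if_neg, hxn, hcast, ← Int.natCast_mod, Int.toNat_natCast,
      Nat.mod_eq_of_lt (by omega)]
    rw [hxn, hcast]
    intro hdvd
    rw [Int.natCast_dvd_natCast] at hdvd
    have := Nat.le_of_dvd (by omega) hdvd
    omega
  have key := core_ineq hp ha hr hn1 hn2
  -- compute brSum of d * x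
  by_cases hdvd : (p ^ r - 1) ∣ ((p ^ a + 1) * n)
  · have hbd : brSum p r (((p ^ a + 1 : ℕ) : ℤ) * x) = r * (p - 1) := by
      unfold brSum
      rw [if_pos]
      rw [hmul, hcast, Int.natCast_dvd_natCast]
      exact hdvd
    rw [hbd, hbx]
    rw [if_pos hdvd] at key
    omega
  · have hbd : brSum p r (((p ^ a + 1 : ℕ) : ℤ) * x) =
        (Nat.digits p (((p ^ a + 1) * n) % (p ^ r - 1))).sum := by
      unfold brSum
      rw [if_neg, hmul, hcast, ← Int.natCast_mod, Int.toNat_natCast]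
      rw [hmul, hcast]
      intro h
      exact hdvd (Int.natCast_dvd_natCast.mp h)
    rw [hbd, hbx]
    rw [if_neg hdvd] at key
    omega
end

section
/- Let p be a prime and a > b ≥ 1 integers such that p^b + 1 divides p^a + 1, and let d = (p^a + 1)/(p^b + 1). Then for every r ≥ 1 and every integer x with 1 ≤ x ≤ p^r - 2, 2·[d·x]_{p,r} ≤ 2·[x]_{p,r} + r(p-1), where [z]_{p,r} = r(p-1) if p^r - 1 divides z. -/
namespace Nat

theorem cast_pow_sub_one {p r : ℕ} (hp : 0 < p) :
    ((p ^ r - 1 : ℕ) : ℤ) = (p : ℤ) ^ r - 1 := by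
  push_cast [Nat.one_le_pow r p hp]; rfl

theorem pow_sub_one_pos {p r : ℕ} (hp : 1 < p) (hr : 0 < r) : 0 < p ^ r - 1 := by
  have := Nat.one_lt_pow hr.ne' hp; omega

theorem digits_sum_add_le {p : ℕ} (hp : p.Prime) (m n : ℕ) :
    (p.digits (m + n)).sum ≤ (p.digits m).sum + (p.digits n).sum := by
  have := Fact.mk hp
  have hv : padicValNat p (m ! * n !) ≤ padicValNat p (m + n)! :=
    (padicValNat_dvd_iff_le (factorial_ne_zero _)).1
      (pow_padicValNat_dvd.trans (factorial_mul_factorial_dvd_factorial_add m n))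
  rw [padicValNat.mul (factorial_ne_zero m) (factorial_ne_zero n)] at hv
  have := sub_one_mul_padicValNat_factorial (p := p) m
  have := sub_one_mul_padicValNat_factorial (p := p) n
  have := sub_one_mul_padicValNat_factorial (p := p) (m + n)
  have := digit_sum_le p m
  have := digit_sum_le p n
  have := digit_sum_le p (m + n)
  have := Nat.mul_le_mul_left (p - 1) hv
  lia

theorem digits_sum_of_lt {b n : ℕ} (h : n < b) : (b.digits n).sum = n := by
  rcases eq_or_ne n 0 with rfl | hn
  · simp
  · simp [digits_of_lt b n hn h]

theorem digits_sum_eq_mod_add {b : ℕ} (hb : 1 < b) (n : ℕ) :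
    (b.digits n).sum = n % b + (b.digits (n / b)).sum := by
  rcases eq_or_ne n 0 with rfl | hn
  · simp
  · rw [digits_def' hb (pos_of_ne_zero hn), List.sum_cons]

theorem digits_sum_add_base_pow_mul {b k a : ℕ} (hb : 1 < b) (ha : a < b ^ k) (c : ℕ) :
    (b.digits (a + b ^ k * c)).sum = (b.digits a).sum + (b.digits c).sum := by
  rcases eq_or_ne c 0 with rfl | hc
  · simp
  have hlen := (digits_length_le_iff hb a).2 ha
  rw [← Nat.add_sub_cancel' hlen, ← digits_append_zeroes_append_digits hb (pos_of_ne_zero hc)]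
  simp

theorem digits_sum_base_pow_sub_one_sub_add {b : ℕ} (hb : 1 < b) :
    ∀ {k y : ℕ}, y < b ^ k → (b.digits (b ^ k - 1 - y)).sum + (b.digits y).sum = k * (b - 1)
  | 0, y, hy => by simp_all
  | k + 1, y, hy => by
    have hyb : y / b < b ^ k := by
      rw [Nat.div_lt_iff_lt_mul (by omega)]; rwa [← pow_succ]
    have hy' : y % b < b := Nat.mod_lt _ (by omega)
    have hsplit : b ^ (k + 1) - 1 - y = (b - 1 - y % b) + b ^ 1 * (b ^ k - 1 - y / b) := by
      have hdiv := Nat.mod_add_div y b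
      have hle : b * (y / b) + b ≤ b * b ^ k := by nlinarith
      rw [pow_one, Nat.mul_sub, Nat.mul_sub, mul_one, pow_succ']
      omega
    rw [hsplit, digits_sum_add_base_pow_mul hb (by rw [pow_one]; omega),
      digits_sum_of_lt (by omega), digits_sum_eq_mod_add hb y]
    have := digits_sum_base_pow_sub_one_sub_add hb hyb
    rw [add_one_mul]
    omega

end Nat

def residueIcc (N : ℕ) (z : ℤ) : ℕ := ((z - 1) % N).toNat + 1

section residueIcc

variable {N : ℕ}

theorem residueIcc_pos (z : ℤ) : 0 < residueIcc N z := Nat.succ_pos _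

theorem residueIcc_le (hN : 0 < N) (z : ℤ) : residueIcc N z ≤ N := by
  have := Int.emod_lt_of_pos (z - 1) (Int.natCast_pos.2 hN)
  unfold residueIcc; omega

theorem residueIcc_modEq (hN : 0 < N) (z : ℤ) : (residueIcc N z : ℤ) ≡ z [ZMOD N] := by
  have := Int.emod_nonneg (z - 1) (Int.natCast_ne_zero.2 hN.ne')
  unfold residueIcc
  rw [Nat.cast_add, Int.toNat_of_nonneg this, Nat.cast_one]
  simpa using (Int.mod_modEq (z - 1) N).add_right 1

theorem residueIcc_eq_of_modEq {z : ℤ} {y : ℕ} (hy : 0 < y) (hyN : y ≤ N)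
    (h : (y : ℤ) ≡ z [ZMOD N]) : residueIcc N z = y := by
  have h' : (y : ℤ) - 1 ≡ z - 1 [ZMOD N] := h.sub_right 1
  unfold residueIcc
  rw [← h', Int.emod_eq_of_lt (by omega) (by omega)]
  omega

theorem residueIcc_eq_self_iff (hN : 0 < N) {z : ℤ} : residueIcc N z = N ↔ (N : ℤ) ∣ z := by
  have hN0 : (N : ℤ) ≡ 0 [ZMOD N] := Int.modEq_zero_iff_dvd.2 dvd_rfl
  constructor
  · intro h
    have := residueIcc_modEq hN z
    rw [h] at this
    exact Int.modEq_zero_iff_dvd.1 (this.symm.trans hN0)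
  · intro h
    exact residueIcc_eq_of_modEq hN le_rfl (hN0.trans (Int.modEq_zero_iff_dvd.2 h).symm)

end residueIcc

section brSum

variable {p r : ℕ}

theorem brSum_of_dvd {z : ℤ} (h : ((p : ℤ) ^ r - 1) ∣ z) : brSum p r z = r * (p - 1) :=
  if_pos h

theorem brSum_eq_digits_sum_residueIcc (hp : 1 < p) (hr : 0 < r) (z : ℤ) :
    brSum p r z = (p.digits (residueIcc (p ^ r - 1) z)).sum := by
  have hN := Nat.pow_sub_one_pos hp hr
  have hcast := Nat.cast_pow_sub_one (r := r) (by omega : 0 < p)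
  unfold brSum
  rw [← hcast]
  split_ifs with h
  · rw [(residueIcc_eq_self_iff hN).2 h]
    simpa using
      (Nat.digits_sum_base_pow_sub_one_sub_add hp (Nat.pow_pos (n := r) (by omega : 0 < p))).symm
  · have h0 : z % ((p ^ r - 1 : ℕ) : ℤ) ≠ 0 := fun h0 => h (Int.dvd_of_emod_eq_zero h0)
    have hnn := Int.emod_nonneg z (Int.natCast_ne_zero.2 hN.ne')
    have hlt := Int.emod_lt_of_pos z (Int.natCast_pos.2 hN)
    rw [residueIcc_eq_of_modEq (y := (z % ((p ^ r - 1 : ℕ) : ℤ)).toNat) (by omega) (by omega)]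
    rw [Int.toNat_of_nonneg hnn]
    exact Int.mod_modEq z _

theorem brSum_add_le (hp : p.Prime) (hr : 0 < r) (u v : ℤ) :
    brSum p r (u + v) ≤ brSum p r u + brSum p r v := by
  have hp1 := hp.one_lt
  have hN := Nat.pow_sub_one_pos hp1 hr
  simp only [brSum_eq_digits_sum_residueIcc hp1 hr]
  set m := residueIcc (p ^ r - 1) u
  set n := residueIcc (p ^ r - 1) v
  have hm := residueIcc_le hN u
  have hn := residueIcc_le hN v
  have hmn : ((m + n : ℕ) : ℤ) ≡ u + v [ZMOD (p ^ r - 1 : ℕ)] := by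
    push_cast; exact (residueIcc_modEq hN u).add (residueIcc_modEq hN v)
  rcases le_or_gt (m + n) (p ^ r - 1) with hle | hgt
  · rw [residueIcc_eq_of_modEq (Nat.add_pos_left (residueIcc_pos u) n) hle hmn]
    exact Nat.digits_sum_add_le hp m n
  · -- past the modulus, `m + n` wraps around to `(m + n - p ^ r) + 1`
    set t := m + n - p ^ r
    have hwrap : ((t + 1 : ℕ) : ℤ) ≡ u + v [ZMOD (p ^ r - 1 : ℕ)] :=
      (Int.modEq_iff_dvd.2 ⟨1, by omega⟩).trans hmn
    rw [residueIcc_eq_of_modEq t.succ_pos (by omega) hwrap]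
    calc (p.digits (t + 1)).sum ≤ (p.digits t).sum + (p.digits 1).sum :=
          Nat.digits_sum_add_le hp t 1
      _ = (p.digits (t + p ^ r * 1)).sum := by
        rw [Nat.digits_sum_add_base_pow_mul hp1 (by omega)]
      _ = (p.digits (m + n)).sum := by congr 2; omega
      _ ≤ (p.digits m).sum + (p.digits n).sum := Nat.digits_sum_add_le hp m n

theorem brSum_natCast_mul (hp : 1 < p) (hr : 0 < r) (z : ℤ) :
    brSum p r (p * z) = brSum p r z := by
  have hN := Nat.pow_sub_one_pos hp hr
  obtain ⟨k, rfl⟩ : ∃ k, r = k + 1 := ⟨r - 1, by omega⟩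
  simp only [brSum_eq_digits_sum_residueIcc hp hr]
  have hm := residueIcc_le hN z
  have hm0 := residueIcc_pos (N := p ^ (k + 1) - 1) z
  have hmz := residueIcc_modEq hN z
  generalize residueIcc (p ^ (k + 1) - 1) z = m at *
  -- multiplication by `p` rotates the `k + 1` digits of `m`: `s + p ^ k * q ↦ q + p * s`
  set q := m / p ^ k
  set s := m % p ^ k
  have hms : s + p ^ k * q = m := Nat.mod_add_div m (p ^ k)
  have hs : s < p ^ k := Nat.mod_lt _ (by positivity)
  have hq : q < p := by
    rw [Nat.div_lt_iff_lt_mul (by positivity), ← pow_succ']; omega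
  have hrot : residueIcc (p ^ (k + 1) - 1) (p * z) = q + p ^ 1 * s := by
    have hps : p * (s + 1) ≤ p ^ (k + 1) := by rw [pow_succ']; exact Nat.mul_le_mul_left p hs
    apply residueIcc_eq_of_modEq
    · rcases Nat.eq_zero_or_pos q with hq0 | hq0
      · rw [hq0, mul_zero, add_zero] at hms
        have : 0 < p ^ 1 * s := Nat.mul_pos (by positivity) (by omega)
        omega
      · omega
    · rw [Nat.mul_succ] at hps
      rw [pow_one]; omega
    · refine Int.ModEq.trans ?_ (hmz.mul_left p)
      refine Int.modEq_iff_dvd.2 ⟨q, ?_⟩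
      rw [Nat.cast_pow_sub_one (by omega), ← hms]
      push_cast
      ring
  rw [hrot, Nat.digits_sum_add_base_pow_mul hp (by rwa [pow_one]), ← hms,
    Nat.digits_sum_add_base_pow_mul hp hs, add_comm]

theorem brSum_pow_mul (hp : 1 < p) (hr : 0 < r) (k : ℕ) (z : ℤ) :
    brSum p r ((p : ℤ) ^ k * z) = brSum p r z := by
  induction k with
  | zero => rw [pow_zero, one_mul]
  | succ k ih => rw [pow_succ', mul_assoc, brSum_natCast_mul hp hr, ih]

theorem brSum_add_brSum_neg (hp : 1 < p) (hr : 0 < r) {z : ℤ} (h : ¬ ((p : ℤ) ^ r - 1) ∣ z) :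
    brSum p r z + brSum p r (-z) = r * (p - 1) := by
  have hN := Nat.pow_sub_one_pos hp hr
  simp only [brSum_eq_digits_sum_residueIcc hp hr]
  set m := residueIcc (p ^ r - 1) z
  have hmN : m < p ^ r - 1 := by
    rw [← Nat.cast_pow_sub_one (by omega), ← residueIcc_eq_self_iff hN] at h
    exact lt_of_le_of_ne (residueIcc_le hN z) h
  have hneg : residueIcc (p ^ r - 1) (-z) = p ^ r - 1 - m := by
    apply residueIcc_eq_of_modEq (by omega) (by omega)
    obtain ⟨c, hc⟩ := Int.modEq_iff_dvd.1 (residueIcc_modEq hN z)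
    refine Int.modEq_iff_dvd.2 ⟨-c - 1, ?_⟩
    push_cast [hmN.le]
    linear_combination -hc
  rw [hneg, add_comm]
  exact Nat.digits_sum_base_pow_sub_one_sub_add hp (by omega)

theorem two_mul_brSum_le (hp : p.Prime) (hr : 0 < r) (k : ℕ) (w : ℤ) :
    2 * brSum p r w ≤ brSum p r ((p : ℤ) ^ k * w + w) + r * (p - 1) := by
  by_cases hw : ((p : ℤ) ^ r - 1) ∣ w
  · have hkw : ((p : ℤ) ^ r - 1) ∣ (p : ℤ) ^ k * w + w := (dvd_mul_of_dvd_right hw _).add hw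
    rw [brSum_of_dvd hw, brSum_of_dvd hkw]
    omega
  · have hcop : IsCoprime ((p : ℤ) ^ k) ((p : ℤ) ^ r - 1) := by
      refine IsCoprime.pow_left ⟨(p : ℤ) ^ (r - 1), -1, ?_⟩
      rw [← pow_succ, Nat.sub_add_cancel hr]; ring
    have hkw : ¬ ((p : ℤ) ^ r - 1) ∣ (p : ℤ) ^ k * w :=
      fun h => hw (hcop.symm.dvd_of_dvd_mul_left h)
    have hsplit :
        brSum p r w ≤ brSum p r ((p : ℤ) ^ k * w + w) + brSum p r (-((p : ℤ) ^ k * w)) := by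
      simpa using brSum_add_le hp hr ((p : ℤ) ^ k * w + w) (-((p : ℤ) ^ k * w))
    have := brSum_add_brSum_neg hp.one_lt hr hkw
    rw [brSum_pow_mul hp.one_lt hr] at this
    omega

theorem brSum_pow_mul_add_self_le (hp : p.Prime) (hr : 0 < r) (k : ℕ) (z : ℤ) :
    brSum p r ((p : ℤ) ^ k * z + z) ≤ 2 * brSum p r z := by
  have := brSum_add_le hp hr ((p : ℤ) ^ k * z) z
  rwa [brSum_pow_mul hp.one_lt hr, ← two_mul] at this

end brSum

theorem brSum_mul_le_of_quotient_general (p a b : ℕ) (hp : p.Prime)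
    (hdvd : (p ^ b + 1) ∣ (p ^ a + 1)) (d : ℕ) (hd : d = (p ^ a + 1) / (p ^ b + 1)) :
    ∀ r : ℕ, 1 ≤ r → ∀ x : ℤ, 1 ≤ x → x ≤ (p : ℤ) ^ r - 2 →
      2 * brSum p r ((d : ℤ) * x) ≤ 2 * brSum p r x + r * (p - 1) := by
  intro r hr x _ _
  have hd' : (d : ℤ) * ((p : ℤ) ^ b + 1) = (p : ℤ) ^ a + 1 := by
    rw [hd]; exact_mod_cast Nat.div_mul_cancel hdvd
  have hdx : (p : ℤ) ^ b * (d * x) + d * x = (p : ℤ) ^ a * x + x := by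
    linear_combination x * hd'
  calc 2 * brSum p r (d * x) ≤ brSum p r ((p : ℤ) ^ b * (d * x) + d * x) + r * (p - 1) :=
        two_mul_brSum_le hp hr b _
    _ = brSum p r ((p : ℤ) ^ a * x + x) + r * (p - 1) := by rw [hdx]
    _ ≤ 2 * brSum p r x + r * (p - 1) := by gcongr; exact brSum_pow_mul_add_self_le hp hr a x

theorem brSum_mul_le_of_quotient (p a b : ℕ) (hp : p.Prime) (hb : 1 ≤ b) (hab : b < a)
    (hdvd : (p ^ b + 1) ∣ (p ^ a + 1)) (d : ℕ) (hd : d = (p ^ a + 1) / (p ^ b + 1)) :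
    ∀ r : ℕ, 1 ≤ r → ∀ x : ℤ, 1 ≤ x → x ≤ (p : ℤ) ^ r - 2 →
      2 * brSum p r ((d : ℤ) * x) ≤ 2 * brSum p r x + r * (p - 1) :=
  brSum_mul_le_of_quotient_general p a b hp hdvd d hd
end

section
/- Let p ≥ 2 be an integer and a > b ≥ 1 integers such that p^b + 1 divides p^a + 1. Then b divides a and the quotient a/b is odd. -/
theorem dvd_pow_add_one_iff (p a b : ℕ) (hp : 2 ≤ p) (hb : 1 ≤ b) (hab : b < a)
    (hdvd : (p ^ b + 1) ∣ (p ^ a + 1)) : b ∣ a ∧ Odd (a / b) := by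
  set n := p ^ b + 1 with hn
  have hpbn : p ^ b < n := by omega
  have hn1 : 1 < n := by
    have : 2 ≤ p ^ b := le_trans hp (Nat.le_self_pow (by omega) p)
    omega
  haveI : NeZero n := ⟨by omega⟩
  have hpb : ((p : ZMod n)) ^ b = -1 := by
    have h2 : ((p ^ b + 1 : ℕ) : ZMod n) = 0 := by rw [← hn]; exact ZMod.natCast_self n
    push_cast at h2
    linear_combination h2
  have hpa : ((p : ZMod n)) ^ a = -1 := by
    have h2 : ((p ^ a + 1 : ℕ) : ZMod n) = 0 := (ZMod.natCast_eq_zero_iff _ _).mpr hdvd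
    push_cast at h2
    linear_combination h2
  set q := a / b with hq
  set r := a % b with hr
  have hrb : r < b := Nat.mod_lt a (by omega)
  have hdm : a = b * q + r := (Nat.div_add_mod a b).symm
  have key : ((-1 : ZMod n)) ^ q * (p : ZMod n) ^ r = -1 := by
    have : (p : ZMod n) ^ a = (-1) ^ q * (p : ZMod n) ^ r := by
      conv_lhs => rw [hdm]
      rw [pow_add, pow_mul, hpb]
    rw [← this, hpa]
  have hprlt : p ^ r < p ^ b := Nat.pow_lt_pow_right (by omega) hrb
  rcases Nat.even_or_odd q with hqe | hqo
  · exfalso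
    rw [hqe.neg_one_pow, one_mul] at key
    have h0 : ((p ^ r + 1 : ℕ) : ZMod n) = 0 := by push_cast; linear_combination key
    have hdvd2 : n ∣ p ^ r + 1 := (ZMod.natCast_eq_zero_iff _ _).mp h0
    have := Nat.le_of_dvd (by omega) hdvd2
    omega
  · rw [hqo.neg_one_pow] at key
    have hpr1 : ((p ^ r : ℕ) : ZMod n) = ((1 : ℕ) : ZMod n) := by
      push_cast; linear_combination -key
    have hval : p ^ r = 1 := by
      have h1 := ZMod.val_cast_of_lt (show p ^ r < n by omega)
      have h2 := ZMod.val_cast_of_lt (show 1 < n from hn1)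
      rw [hpr1] at h1
      omega
    have hr0 : r = 0 := by
      by_contra h
      have : p ≤ p ^ r := Nat.le_self_pow h p
      omega
    exact ⟨Nat.dvd_of_mod_eq_zero hr0, hqo⟩
end

section
/- Let k be a finite field with q elements, d ≥ 1 an integer, z ∈ k^×, and χ : k^× → ℂ^× a multiplicative character. Then Σ_{x ∈ k^×, x^d = z} χ(x) = Σ_{η : k^× → ℂ^×, η^d = χ} η(z). -/
open Finset
open scoped Classical

section aux

variable (k : Type) [Field k] [Fintype k]

instance aux_neZero : NeZero ((Monoid.exponent kˣ : ℕ) : ℂ) :=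
  ⟨Nat.cast_ne_zero.mpr Monoid.exponent_ne_zero_of_finite⟩

noncomputable instance aux_fintype : Fintype (kˣ →* ℂˣ) :=
  have : Finite (kˣ →* ℂˣ) := .of_equiv _ (MulChar.equivToUnitHom (R := k) (R' := ℂ))
  .ofFinite _

lemma aux_card : Fintype.card (kˣ →* ℂˣ) = Fintype.card kˣ := by
  have e := (CommGroup.monoidHom_mulEquiv_of_hasEnoughRootsOfUnity kˣ ℂ).some
  exact Fintype.card_congr e.toEquiv

/-- orthogonality over group elements -/
lemma aux_sum_group (ψ : kˣ →* ℂˣ) :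
    ∑ x : kˣ, ((ψ x : ℂˣ) : ℂ) = if ψ = 1 then (Fintype.card kˣ : ℂ) else 0 := by
  split_ifs with h
  · simp [h]
  · obtain ⟨a, ha⟩ : ∃ a : kˣ, ψ a ≠ 1 := by
      by_contra hc
      push_neg at hc
      exact h (MonoidHom.ext fun a => hc a)
    have ha' : ((ψ a : ℂˣ) : ℂ) ≠ 1 := by
      exact fun hc => ha (Units.val_eq_one.mp hc)
    refine eq_zero_of_mul_eq_self_left ha' ?_
    rw [Finset.mul_sum]
    have := Fintype.sum_bijective _ (Group.mulLeft_bijective a)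
      (fun x => ((ψ (a * x) : ℂˣ) : ℂ)) (fun x => ((ψ x : ℂˣ) : ℂ)) (fun x => rfl)
    simpa [map_mul] using this

/-- orthogonality over dual -/
lemma aux_sum_dual (g : kˣ) :
    ∑ η : kˣ →* ℂˣ, ((η g : ℂˣ) : ℂ) = if g = 1 then (Fintype.card kˣ : ℂ) else 0 := by
  split_ifs with h
  · simp [h, ← aux_card k]
  · obtain ⟨φ, hφ⟩ := CommGroup.exists_apply_ne_one_of_hasEnoughRootsOfUnity kˣ ℂ h
    have hφ' : ((φ g : ℂˣ) : ℂ) ≠ 1 := fun hc => hφ (Units.val_eq_one.mp hc)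
    refine eq_zero_of_mul_eq_self_left hφ' ?_
    rw [Finset.mul_sum]
    have := Fintype.sum_bijective _ (Group.mulLeft_bijective φ)
      (fun η => (((φ * η) g : ℂˣ) : ℂ)) (fun η => ((η g : ℂˣ) : ℂ)) (fun η => rfl)
    simpa using this

end aux

open Classical in
theorem sum_char_roots_eq_sum_chars (k : Type) [Field k] [Fintype k]
    (q : ℕ) (hq : Fintype.card k = q) (d : ℕ) (hd : 1 ≤ d)
    (z : kˣ) (χ : kˣ →* ℂˣ) :
    ∑ x ∈ Finset.univ.filter (fun x : kˣ => x ^ d = z), (χ x : ℂ) =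
      ∑ᶠ η ∈ {η : kˣ →* ℂˣ | η ^ d = χ}, ((η z : ℂˣ) : ℂ) := by
  have hN : (Fintype.card kˣ : ℂ) ≠ 0 := Nat.cast_ne_zero.mpr Fintype.card_ne_zero
  have hset : {η : kˣ →* ℂˣ | η ^ d = χ}
      = ↑(Finset.univ.filter (fun η : kˣ →* ℂˣ => η ^ d = χ)) := by
    ext η; simp
  rw [hset, finsum_mem_coe_finset]
  refine mul_left_cancel₀ hN ?_
  calc (Fintype.card kˣ : ℂ) * ∑ x ∈ Finset.univ.filter (fun x : kˣ => x ^ d = z), (χ x : ℂ)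
      = ∑ x : kˣ, (if x ^ d = z then (Fintype.card kˣ : ℂ) else 0) * (χ x : ℂ) := by
        rw [Finset.mul_sum, Finset.sum_filter]
        refine Finset.sum_congr rfl fun x _ => ?_
        split_ifs <;> simp
    _ = ∑ x : kˣ, (∑ η : kˣ →* ℂˣ, ((η (x ^ d * z⁻¹) : ℂˣ) : ℂ)) * (χ x : ℂ) := by
        refine Finset.sum_congr rfl fun x _ => ?_
        rw [aux_sum_dual]
        congr 1
        simp [mul_inv_eq_one]
    _ = ∑ η : kˣ →* ℂˣ, (((η z : ℂˣ) : ℂ))⁻¹ * ∑ x : kˣ, (((η ^ d * χ) x : ℂˣ) : ℂ) := by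
        simp only [Finset.sum_mul, Finset.mul_sum]
        rw [Finset.sum_comm]
        refine Finset.sum_congr rfl fun η _ => Finset.sum_congr rfl fun x _ => ?_
        simp only [map_mul, map_pow, map_inv, MonoidHom.mul_apply, MonoidHom.pow_apply,
          Units.val_mul, Units.val_pow_eq_pow_val, Units.val_inv_eq_inv_val]
        ring
    _ = ∑ η : kˣ →* ℂˣ, (((η z : ℂˣ) : ℂ))⁻¹ *
          (if η ^ d * χ = 1 then (Fintype.card kˣ : ℂ) else 0) := by
        refine Finset.sum_congr rfl fun η _ => ?_
        rw [aux_sum_group]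
    _ = (Fintype.card kˣ : ℂ) *
          ∑ η ∈ Finset.univ.filter (fun η : kˣ →* ℂˣ => η ^ d = χ⁻¹), (((η z : ℂˣ) : ℂ))⁻¹ := by
        rw [Finset.mul_sum, Finset.sum_filter]
        refine Finset.sum_congr rfl fun η _ => ?_
        have hiff : η ^ d * χ = 1 ↔ η ^ d = χ⁻¹ := by
          constructor
          · intro h
            ext x
            have hx := DFunLike.congr_fun h x
            simp only [MonoidHom.mul_apply, MonoidHom.pow_apply, MonoidHom.one_apply] at hx
            simp only [MonoidHom.pow_apply, MonoidHom.inv_apply]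
            exact congrArg Units.val (eq_inv_of_mul_eq_one_left hx)
          · intro h
            ext x
            have hx := DFunLike.congr_fun h x
            simp only [MonoidHom.pow_apply, MonoidHom.inv_apply] at hx
            simp only [MonoidHom.mul_apply, MonoidHom.pow_apply, MonoidHom.one_apply]
            rw [hx, inv_mul_cancel]
        split_ifs with h1 h2 h2 <;> simp_all [hiff] <;> ring
    _ = (Fintype.card kˣ : ℂ) *
          ∑ η ∈ Finset.univ.filter (fun η : kˣ →* ℂˣ => η ^ d = χ), ((η z : ℂˣ) : ℂ) := by
        congr 1
        refine Finset.sum_nbij' (fun η => η⁻¹) (fun η => η⁻¹) ?_ ?_ ?_ ?_ ?_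
        · intro η hη
          simp only [Finset.mem_filter, Finset.mem_univ, true_and] at hη ⊢
          ext x
          have hx := DFunLike.congr_fun hη x
          simp only [MonoidHom.pow_apply, MonoidHom.inv_apply] at hx ⊢
          rw [inv_pow, hx, inv_inv]
        · intro η hη
          simp only [Finset.mem_filter, Finset.mem_univ, true_and] at hη ⊢
          ext x
          have hx := DFunLike.congr_fun hη x
          simp only [MonoidHom.pow_apply, MonoidHom.inv_apply] at hx ⊢
          rw [inv_pow, hx]
        · intro η _; ext x; simp
        · intro η _; ext x; simp
        · intro η _
          simp [MonoidHom.inv_apply]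
end

section
/- Let p be a prime and d ≥ 3 an integer prime to p that is not of the form p^r + 1 for any r ≥ 1. Then there exists a positive integer l with l < d − (d−1)/p such that p does not divide d − l and p does not divide the binomial coefficient C(d, l). -/
open Nat

/-- Lucas step: if `p ∤ choose (n % p) (k % p) * choose (n / p) (k / p)` then `p ∤ choose n k`. -/
private lemma lucas_step {p : ℕ} (hp : p.Prime) (n k : ℕ)
    (h : ¬ p ∣ Nat.choose (n % p) (k % p) * Nat.choose (n / p) (k / p)) :
    ¬ p ∣ Nat.choose n k := by
  haveI := Fact.mk hp
  intro hdvd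
  have hmod : Nat.choose n k ≡ Nat.choose (n % p) (k % p) * Nat.choose (n / p) (k / p) [MOD p] :=
    Choose.choose_modEq_choose_mod_mul_choose_div_nat
  have h0 : Nat.choose n k ≡ 0 [MOD p] := (Nat.modEq_zero_iff_dvd).mpr hdvd
  exact h ((Nat.modEq_zero_iff_dvd).mp (hmod.symm.trans h0))

private lemma not_dvd_choose_pow_mul {p : ℕ} (hp : p.Prime) (m : ℕ) (hm : ¬ p ∣ m) :
    ∀ s : ℕ, ¬ p ∣ Nat.choose (p ^ s * m) (p ^ s) := by
  intro s
  induction s with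
  | zero =>
    simpa [Nat.choose_one_right] using hm
  | succ s ih =>
    have hp0 : 0 < p := hp.pos
    apply lucas_step hp
    have h1 : (p ^ (s + 1) * m) % p = 0 := by
      simp [Nat.mul_mod, Nat.pow_mod, Nat.pow_succ, Nat.mul_mod_left]
    have h2 : (p ^ (s + 1)) % p = 0 := by
      simp [Nat.pow_succ, Nat.mul_mod_left]
    have h3 : (p ^ (s + 1) * m) / p = p ^ s * m := by
      rw [pow_succ, mul_comm (p ^ s) p, mul_assoc, Nat.mul_div_cancel_left _ hp0]
    have h4 : (p ^ (s + 1)) / p = p ^ s := by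
      rw [pow_succ, Nat.mul_div_cancel _ hp0]
    rw [h1, h2, h3, h4]
    simpa using ih

private lemma ineq_aux (p d l : ℕ) (hp : 0 < p) (h : p * l + d ≤ p * d) :
    (l : ℚ) < (d : ℚ) - ((d : ℚ) - 1) / (p : ℚ) := by
  have hp0 : (0 : ℚ) < (p : ℚ) := by exact_mod_cast hp
  have h' : (p : ℚ) * l + d ≤ (p : ℚ) * d := by exact_mod_cast h
  have key : ((d : ℚ) - 1) / (p : ℚ) < (d : ℚ) - l := by
    rw [div_lt_iff₀ hp0]
    nlinarith
  linarith

theorem exists_good_binomial (p d : ℕ) (hp : p.Prime) (hd : 3 ≤ d) (hpd : ¬ p ∣ d)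
    (hnot : ∀ r : ℕ, 1 ≤ r → d ≠ p ^ r + 1) :
    ∃ l : ℕ, 0 < l ∧ (l : ℚ) < (d : ℚ) - ((d : ℚ) - 1) / (p : ℚ) ∧
      ¬ p ∣ (d - l) ∧ ¬ p ∣ Nat.choose d l := by
  have hp2 : 2 ≤ p := hp.two_le
  by_cases h1 : p ∣ d - 1
  · -- p divides d - 1; take l = p ^ r where r = v_p(d-1)
    have hdne : d - 1 ≠ 0 := by omega
    obtain ⟨r, m, hr1, hpm, hfac⟩ : ∃ r m, 1 ≤ r ∧ ¬ p ∣ m ∧ p ^ r * m = d - 1 :=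
      ⟨(d - 1).factorization p, (d - 1) / p ^ ((d - 1).factorization p),
        hp.factorization_pos_of_dvd hdne h1, Nat.not_dvd_ordCompl hp hdne,
        Nat.ordProj_mul_ordCompl_eq_self (d - 1) p⟩
    have hd1 : d = p ^ r * m + 1 := by omega
    have hm2 : 2 ≤ m := by
      rcases Nat.lt_or_ge m 2 with hlt | hge
      · interval_cases m
        · omega
        · exact absurd (by omega : d = p ^ r + 1) (hnot r hr1)
      · exact hge
    have hpr2 : 2 ≤ p ^ r := le_trans hp2 (Nat.le_self_pow (by omega) p)
    obtain ⟨s, rfl⟩ : ∃ s, r = s + 1 := ⟨r - 1, by omega⟩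
    refine ⟨p ^ (s + 1), by positivity, ?_, ?_, ?_⟩
    · apply ineq_aux p d (p ^ (s + 1)) hp.pos
      have h5 : p + m ≤ p * m := by nlinarith
      have h6 := Nat.mul_le_mul_left (p ^ (s + 1)) h5
      nlinarith [h6, hpr2]
    · have e : d - p ^ (s + 1) = p ^ (s + 1) * (m - 1) + 1 := by
        have e1 : p ^ (s + 1) * (m - 1) = p ^ (s + 1) * m - p ^ (s + 1) := by
          rw [Nat.mul_sub, Nat.mul_one]
        have hge : p ^ (s + 1) ≤ d - 1 := by
          rw [← hfac]; exact Nat.le_mul_of_pos_right _ (by omega)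
        rw [e1, hfac]
        omega
      rw [e]
      intro hdvd
      have hdvd1 : p ∣ p ^ (s + 1) * (m - 1) :=
        Dvd.dvd.mul_right (dvd_pow_self p (by omega)) _
      have : p ∣ 1 := (Nat.dvd_add_right hdvd1).mp hdvd
      have := Nat.le_of_dvd one_pos this
      omega
    · rw [hd1]
      apply lucas_step hp
      have hn : p ^ (s + 1) * m + 1 = p * (p ^ s * m) + 1 := by ring
      have h1 : (p ^ (s + 1) * m + 1) % p = 1 := by
        rw [hn, Nat.mul_add_mod, Nat.mod_eq_of_lt (by omega)]
      have h2 : (p ^ (s + 1)) % p = 0 := by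
        simp [Nat.pow_succ, Nat.mul_mod_left]
      have h3 : (p ^ (s + 1) * m + 1) / p = p ^ s * m := by
        rw [hn, Nat.mul_add_div hp.pos, Nat.div_eq_of_lt (by omega : 1 < p), Nat.add_zero]
      have h4 : (p ^ (s + 1)) / p = p ^ s := by
        rw [pow_succ, Nat.mul_div_cancel _ hp.pos]
      rw [h1, h2, h3, h4]
      simpa using not_dvd_choose_pow_mul hp m hpm s
  · -- p does not divide d - 1; take l = 1
    refine ⟨1, one_pos, ?_, ?_, ?_⟩
    · exact ineq_aux p d 1 hp.pos (by nlinarith)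
    · simpa using h1
    · simpa [Nat.choose_one_right] using hpd
end
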